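/- arXiv:2210.15488 — 2 statements merged into one kernel-verified Lean document; each statement's English description precedes it below -/
import Mathlib

section
/- The Fibonacci substitution point set is a cut-and-project set feature: the set Λ = { m + nτ : m, n ∈ ℤ, and m − nτ' ∈ [0, 1) } with τ = (1+√5)/2 and τ' = (1−√5)/2 is relatively dense in ℝ; more precisely, every interval of length τ^2 contains at least one point of Λ. -/
noncomputable def fibTau : ℝ := (1 + Real.sqrt 5) / 2
noncomputable def fibTau' : ℝ := (1 - Real.sqrt 5) / 2

/-- The Fibonacci cut-and-project set. -/
noncomputable def fibLambda : Set ℝ :=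
  {r | ∃ m n : ℤ, r = m + n * fibTau ∧ 0 ≤ (m : ℝ) - n * fibTau' ∧ (m : ℝ) - n * fibTau' < 1}

/-! Since `τ + τ' = 1`, a point `m + nτ` equals `(m - nτ') + n`, so the window condition places
it in `[n, n + 1)`; for every integer `n` the choice `m = ⌈nτ'⌉` meets the window. Hence
`[⌈a⌉, ⌈a⌉ + 1)` contains a point of `Λ`, and this interval lies in `[a, a + 2] ⊆ [a, a + τ²]`. -/

open Real goldenRatio

lemma fibTau_eq_goldenRatio : fibTau = φ := rfl

lemma fibTau'_eq_goldenConj : fibTau' = ψ := rfl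

lemma two_lt_fibTau_sq : 2 < fibTau ^ 2 := by
  rw [fibTau_eq_goldenRatio, goldenRatio_sq]
  linarith [one_lt_goldenRatio]

lemma exists_mem_fibLambda_mem_Ico (n : ℤ) : ∃ r ∈ fibLambda, r ∈ Set.Ico (n : ℝ) (n + 1) := by
  set m : ℤ := ⌈n * fibTau'⌉
  have hm₀ : 0 ≤ (m : ℝ) - n * fibTau' := by linarith [Int.le_ceil ((n : ℝ) * fibTau')]
  have hm₁ : (m : ℝ) - n * fibTau' < 1 := by linarith [Int.ceil_lt_add_one ((n : ℝ) * fibTau')]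
  have hsplit : (m : ℝ) + n * fibTau = (m - n * fibTau') + n := by
    rw [fibTau_eq_goldenRatio, fibTau'_eq_goldenConj, ← one_sub_goldenRatio]
    ring
  refine ⟨m + n * fibTau, ⟨m, n, rfl, hm₀, hm₁⟩, ?_, ?_⟩ <;> linarith

theorem fibLambda_relatively_dense :
    ∀ a : ℝ, ∃ r ∈ fibLambda, r ∈ Set.Icc a (a + fibTau ^ 2) := by
  intro a
  obtain ⟨r, hr, hlo, hhi⟩ := exists_mem_fibLambda_mem_Ico ⌈a⌉
  refine ⟨r, hr, ?_, ?_⟩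
  · linarith [Int.le_ceil a]
  · linarith [Int.ceil_lt_add_one a, two_lt_fibTau_sq]
end

section
/- The cut-and-project set Λ = { m + nτ : m, n ∈ ℤ, 0 ≤ m − nτ' < 1 } (τ = (1+√5)/2, τ' = (1−√5)/2) is uniformly discrete: any two distinct points of Λ are at distance at least τ − 1. -/
theorem fibLambda_uniformly_discrete :
    ∀ r ∈ fibLambda, ∀ s ∈ fibLambda, r ≠ s → fibTau - 1 ≤ |r - s| := by
  have hs5 : Real.sqrt 5 ^ 2 = 5 := Real.sq_sqrt (by norm_num)
  have h2 : (2 : ℝ) < Real.sqrt 5 := by nlinarith [Real.sqrt_nonneg 5, hs5]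
  have h3 : Real.sqrt 5 < 3 := by nlinarith [Real.sqrt_nonneg 5, hs5]
  rintro r ⟨m, n, hr, hr0, hr1⟩ s ⟨m', n', hs, hs0, hs1⟩ hne
  -- key decomposition: r - s = C + B where C = A - B*τ' ∈ (-1,1), B = n - n'
  have hrs : r - s = (((m : ℝ) - n * fibTau') - ((m' : ℝ) - n' * fibTau'))
      + ((n : ℝ) - n') := by
    rw [hr, hs]; unfold fibTau fibTau'; ring
  have hCl : -1 < ((m : ℝ) - n * fibTau') - ((m' : ℝ) - n' * fibTau') := by linarith
  have hCu : ((m : ℝ) - n * fibTau') - ((m' : ℝ) - n' * fibTau') < 1 := by linarith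
  have htau' : fibTau' = (1 - Real.sqrt 5) / 2 := rfl
  rcases eq_or_ne n n' with hb | hb
  · -- b = 0 : r - s = m - m', a nonzero integer
    subst hb
    have hm : m ≠ m' := by rintro rfl; exact hne (hr.trans hs.symm)
    have h1 : (1 : ℝ) ≤ |(m : ℝ) - m'| := by
      have h := Int.one_le_abs (sub_ne_zero.mpr hm)
      calc (1:ℝ) ≤ ((|m - m'| : ℤ) : ℝ) := by exact_mod_cast h
        _ = |(m : ℝ) - m'| := by push_cast; ring_nf
    have heq : r - s = (m : ℝ) - m' := by rw [hr, hs]; ring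
    rw [heq]; unfold fibTau; linarith
  · rcases eq_or_ne n (n' + 1) with hb1 | hb1
    · -- b = 1 : r - s = A + τ with integer A ≥ -1
      subst hb1
      have hA : (-2 : ℝ) < (m : ℝ) - m' := by
        rw [htau'] at hCl
        push_cast at hCl
        nlinarith [hCl, h2]
      have hA' : (-1 : ℝ) ≤ (m : ℝ) - m' := by
        have : (-2 : ℤ) < m - m' := by exact_mod_cast hA
        have : (-1 : ℤ) ≤ m - m' := by omega
        exact_mod_cast this
      have heq : r - s = ((m : ℝ) - m') + fibTau := by
        rw [hr, hs]; push_cast; ring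
      have hpos : (0 : ℝ) < r - s := by
        rw [heq]; unfold fibTau; nlinarith
      rw [abs_of_pos hpos, heq]; unfold fibTau; linarith
    · rcases eq_or_ne n' (n + 1) with hb2 | hb2
      · -- b = -1 : r - s = A - τ with integer A ≤ 1
        subst hb2
        have hA : (m : ℝ) - m' < 2 := by
          rw [htau'] at hCu
          push_cast at hCu
          nlinarith [hCu, h2]
        have hA' : (m : ℝ) - m' ≤ 1 := by
          have : (m - m' : ℤ) < 2 := by exact_mod_cast hA
          have : (m - m' : ℤ) ≤ 1 := by omega
          exact_mod_cast this
        have heq : r - s = ((m : ℝ) - m') - fibTau := by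
          rw [hr, hs]; push_cast; ring
        have hneg : r - s < 0 := by
          rw [heq]; unfold fibTau; nlinarith
        rw [abs_of_neg hneg, heq]; unfold fibTau; linarith
      · -- |b| ≥ 2
        have hB : (2 : ℝ) ≤ |(n : ℝ) - n'| := by
          have h1 : (2 : ℤ) ≤ |n - n'| := by
            rcases abs_cases (n - n') with ⟨h, _⟩ | ⟨h, _⟩ <;> omega
          calc (2:ℝ) ≤ ((|n - n'| : ℤ) : ℝ) := by exact_mod_cast h1
            _ = |(n : ℝ) - n'| := by push_cast; ring_nf
        have hC : |((m : ℝ) - n * fibTau') - ((m' : ℝ) - n' * fibTau')| < 1 :=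
          abs_lt.mpr ⟨hCl, hCu⟩
        have h1 : (1 : ℝ) ≤ |r - s| := by
          set C : ℝ := ((m : ℝ) - n * fibTau') - ((m' : ℝ) - n' * fibTau') with hCdef
          rw [hrs]
          have ht := abs_add_le (C + ((n : ℝ) - n')) (-C)
          rw [abs_neg] at ht
          have he : C + ((n : ℝ) - n') + -C = (n : ℝ) - n' := by ring
          rw [he] at ht
          linarith
        unfold fibTau; linarith
end
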